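/- Let $h: X_A \to X_B$ be a continuous orbit map with functions $k_1, l_1$. For $f \in C(X_B, \mathbb{Z})$ define $\Psi_h(f)(x) = \sum_{i=0}^{l_1(x)-1} f(\sigma_B^i(h(x))) - \sum_{j=0}^{k_1(x)-1} f(\sigma_B^j(h(\sigma_A(x))))$. Then for all $f \in C(X_B,\mathbb{Z})$, $x \in X_A$ and $m \geq 1$: $\sum_{i=0}^{m-1} \Psi_h(f)(\sigma_A^i(x))$ (where each summand uses $l_1, k_1$ at $\sigma_A^i(x)$) equals $\sum_{i'=0}^{l_1^m(x)-1} f(\sigma_B^{i'}(h(x))) - \sum_{j'=0}^{k_1^m(x)-1} f(\sigma_B^{j'}(h(\sigma_A^m(x))))$, where $k_1^m, l_1^m$ are the ergodic sums along $\sigma_A$. -/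

import Mathlib

open Function Finset

/-- The one-sided topological Markov shift space of a `{0,1}`-matrix `A`. -/
abbrev MarkovShift {N : ℕ} (A : Matrix (Fin N) (Fin N) (Fin 2)) :=
  {x : ℕ → Fin N // ∀ n : ℕ, A (x n) (x (n + 1)) = 1}

/-- The shift map `σ_A` on the one-sided Markov shift. -/
def mshift {N : ℕ} (A : Matrix (Fin N) (Fin N) (Fin 2)) :
    MarkovShift A → MarkovShift A :=
  fun x => ⟨fun n => x.1 (n + 1), fun n => x.2 (n + 1)⟩

/-- Ergodic sums `f^n(x) = ∑_{i<n} f(σ^i x)`. -/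
def esum {X : Type*} (σ : X → X) (f : X → ℕ) (n : ℕ) (x : X) : ℕ :=
  ∑ i ∈ Finset.range n, f (σ^[i] x)

/-- The map `Ψ_h(f)(x) = ∑_{i<l(x)} f(σ_Y^i(h x)) - ∑_{j<k(x)} f(σ_Y^j(h(σ_X x)))`
induced by a continuous orbit map `h` with data `(k, l)`. -/
def cocycleSum {X Y : Type*} (σX : X → X) (σY : Y → Y) (h : X → Y)
    (k l : X → ℕ) (f : Y → ℤ) (x : X) : ℤ :=
  (∑ i ∈ Finset.range (l x), f (σY^[i] (h x))) -
    ∑ j ∈ Finset.range (k x), f (σY^[j] (h (σX x)))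

/-!
Both sides are Birkhoff sums of `f` along `σ_B`-orbits. Iterating the orbit equation gives
`σ_B^{k_1^m(x)}(h(σ_A^m x)) = σ_B^{l_1^m(x)}(h x)`, so the right-hand side for `m + 1` splits,
by additivity of Birkhoff sums in the length, into the right-hand side for `m` plus `Ψ_h(f)(σ_A^m x)`.
-/

section OrbitMap

variable {X Y : Type*} {σX : X → X} {σY : Y → Y} {h : X → Y} {k l : X → ℕ}

lemma cocycleSum_eq_birkhoffSum (f : Y → ℤ) (x : X) :
    cocycleSum σX σY h k l f x =
      birkhoffSum σY f (l x) (h x) - birkhoffSum σY f (k x) (h (σX x)) :=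
  rfl

lemma esum_succ (σ : X → X) (g : X → ℕ) (n : ℕ) (x : X) :
    esum σ g (n + 1) x = esum σ g n x + g (σ^[n] x) :=
  birkhoffSum_succ σ g n x

theorem iterate_esum_orbit (horb : ∀ x, σY^[k x] (h (σX x)) = σY^[l x] (h x))
    (m : ℕ) (x : X) :
    σY^[esum σX k m x] (h (σX^[m] x)) = σY^[esum σX l m x] (h x) := by
  induction m with
  | zero => simp [esum]
  | succ m ih =>
    set y := σX^[m] x
    calc σY^[esum σX k (m + 1) x] (h (σX^[m + 1] x))
        = σY^[esum σX k m x] (σY^[k y] (h (σX y))) := by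
          rw [esum_succ, iterate_add_apply, iterate_succ_apply']
      _ = σY^[l y] (σY^[esum σX k m x] (h y)) := by
          rw [horb, ← iterate_add_apply, add_comm, iterate_add_apply]
      _ = σY^[esum σX l (m + 1) x] (h x) := by
          rw [ih, ← iterate_add_apply, esum_succ, add_comm]

theorem sum_range_cocycleSum (horb : ∀ x, σY^[k x] (h (σX x)) = σY^[l x] (h x))
    (f : Y → ℤ) (m : ℕ) (x : X) :
    ∑ i ∈ range m, cocycleSum σX σY h k l f (σX^[i] x) =
      birkhoffSum σY f (esum σX l m x) (h x) -
        birkhoffSum σY f (esum σX k m x) (h (σX^[m] x)) := by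
  induction m with
  | zero => simp [esum, birkhoffSum_zero]
  | succ m ih =>
    set y := σX^[m] x
    set K := esum σX k m x
    have hL : birkhoffSum σY f (esum σX l (m + 1) x) (h x) =
        birkhoffSum σY f (esum σX l m x) (h x) + birkhoffSum σY f (l y) (σY^[K] (h y)) := by
      rw [esum_succ, birkhoffSum_add, ← iterate_esum_orbit horb]
    have hK : birkhoffSum σY f (esum σX k (m + 1) x) (h (σX^[m + 1] x)) =
        birkhoffSum σY f (k y) (h (σX y)) + birkhoffSum σY f K (σY^[l y] (h y)) := by
      rw [esum_succ, add_comm K, birkhoffSum_add, iterate_succ_apply', horb]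
    have hsplit : birkhoffSum σY f K (h y) + birkhoffSum σY f (l y) (σY^[K] (h y)) =
        birkhoffSum σY f (l y) (h y) + birkhoffSum σY f K (σY^[l y] (h y)) := by
      rw [← birkhoffSum_add, ← birkhoffSum_add, add_comm]
    rw [sum_range_succ, ih, hL, hK, cocycleSum_eq_birkhoffSum]
    linear_combination -hsplit

end OrbitMap

theorem cocycleSum_telescope_general {N M : ℕ}
    (A : Matrix (Fin N) (Fin N) (Fin 2)) (B : Matrix (Fin M) (Fin M) (Fin 2))
    (h : MarkovShift A → MarkovShift B)
    (k1 l1 : MarkovShift A → ℕ)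
    (horb : ∀ x, (mshift B)^[k1 x] (h (mshift A x)) = (mshift B)^[l1 x] (h x)) :
    ∀ (f : MarkovShift B → ℤ), Continuous f →
      ∀ (x : MarkovShift A) (m : ℕ), 1 ≤ m →
        ∑ i ∈ Finset.range m,
            cocycleSum (mshift A) (mshift B) h k1 l1 f ((mshift A)^[i] x)
          = (∑ i ∈ Finset.range (esum (mshift A) l1 m x), f ((mshift B)^[i] (h x))) -
              ∑ j ∈ Finset.range (esum (mshift A) k1 m x),
                f ((mshift B)^[j] (h ((mshift A)^[m] x))) :=
  fun f _ x m _ => sum_range_cocycleSum horb f m x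

/-- the telescoping formula for sums of `Ψ_h(f)` along the orbit. -/
theorem cocycleSum_telescope {N M : ℕ}
    (A : Matrix (Fin N) (Fin N) (Fin 2)) (B : Matrix (Fin M) (Fin M) (Fin 2))
    (h : MarkovShift A → MarkovShift B) (hlh : IsLocalHomeomorph h)
    (k1 l1 : MarkovShift A → ℕ) (hk1 : Continuous k1) (hl1 : Continuous l1)
    (horb : ∀ x, (mshift B)^[k1 x] (h (mshift A x)) = (mshift B)^[l1 x] (h x)) :
    ∀ (f : MarkovShift B → ℤ), Continuous f →
      ∀ (x : MarkovShift A) (m : ℕ), 1 ≤ m →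
        ∑ i ∈ Finset.range m,
            cocycleSum (mshift A) (mshift B) h k1 l1 f ((mshift A)^[i] x)
          = (∑ i ∈ Finset.range (esum (mshift A) l1 m x), f ((mshift B)^[i] (h x))) -
              ∑ j ∈ Finset.range (esum (mshift A) k1 m x),
                f ((mshift B)^[j] (h ((mshift A)^[m] x))) :=
  cocycleSum_telescope_general A B h k1 l1 horb
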